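/- Let 1 ≤ k < m, let (λ_1, u_1), …, (λ_k, u_k) be exact eigenpairs of A (A u_i = λ_i u_i) with λ_1 ≤ ⋯ ≤ λ_k, and set μ_i = 1/λ_i. Assume δ_{k,i} := min_{k<j≤m} |μ̃_j − μ_i| > 0 for 1 ≤ i ≤ k. Let E_{m,k} be the A-orthogonal projection onto span{ũ_1, …, ũ_k}. Then for each 1 ≤ i ≤ k: ‖u_i − E_{m,k} u_i‖₂ ≤ (1 + μ̃_{k+1}/δ_{k,i}) η_K · ‖u_i − E_{m,k} u_i‖_A. -/

import Mathlib

open Matrix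

/-- The Euclidean (`L²`) norm on `ℝⁿ`: `‖x‖₂ = √(xᵀx)`. -/
noncomputable def l2N {n : ℕ} (x : Fin n → ℝ) : ℝ := Real.sqrt (x ⬝ᵥ x)

/-- The energy norm induced by the matrix `A`: `‖x‖_A = √(xᵀAx)`. -/
noncomputable def aN {n : ℕ} (A : Matrix (Fin n) (Fin n) ℝ) (x : Fin n → ℝ) : ℝ :=
  Real.sqrt (x ⬝ᵥ (A *ᵥ x))

/-- `η_K = sup_{‖g‖₂ = 1} ‖(I - P_K) A⁻¹ g‖_A`, where `P` is the `A`-orthogonal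
projection onto the subspace `K`. -/
noncomputable def etaK {n : ℕ} (A : Matrix (Fin n) (Fin n) ℝ)
    (P : (Fin n → ℝ) →ₗ[ℝ] (Fin n → ℝ)) : ℝ :=
  sSup ((fun g => aN A ((A⁻¹ *ᵥ g) - P (A⁻¹ *ᵥ g))) '' {g | l2N g = 1})


/-!
Fix `i`, put `e = u_i - E u_i`, `s = u_i - P u_i`, and for `g ∈ ℝⁿ` let `w = A⁻¹ g`, so that
`(e, g) = (e, w - P w)_A + (e, P w)_A`. The first term is at most `η_K ‖e‖_A ‖g‖₂`. Expanding
`P w = ∑ (ũ_j, g) ũ_j` in the `A`-orthonormal Ritz basis of `K`, the terms `j ≤ k` vanish since `e`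
is `A`-orthogonal to `ũ_1, …, ũ_k`, and for `j > k` the Ritz and eigen equations give
`(e, ũ_j)_A (μ̃_j - μ_i) = -(ũ_j, s)`. Hence the second term is `-(z, s)` for some `z` with
`‖z‖₂ ≤ μ̃_{k+1} / δ_{k,i} ‖g‖₂`, by Bessel's inequality for the `L²`-orthonormal vectors
`√λ̃_j ũ_j`. As `s ⊥_A K`, duality bounds `(z, s)` by `η_K ‖z‖₂ ‖s‖_A`, and `‖s‖_A ≤ ‖e‖_A`
because `P u_i` is the best energy approximation of `u_i` in `K`.
-/

lemma Matrix.mulVec_nonsing_inv_mulVec {d R : Type*} [Fintype d] [DecidableEq d] [CommRing R]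
    {B : Matrix d d R} (hB : IsUnit B) (g : d → R) : B *ᵥ (B⁻¹ *ᵥ g) = g := by
  rw [mulVec_mulVec, mul_nonsing_inv B (B.isUnit_iff_isUnit_det.1 hB), one_mulVec]

section EnergyNorm

variable {n : ℕ} {A : Matrix (Fin n) (Fin n) ℝ}

lemma Matrix.IsHermitian.dotProduct_mulVec_comm {ι : Type*} [Fintype ι] {B : Matrix ι ι ℝ}
    (hB : B.IsHermitian) (x y : ι → ℝ) : x ⬝ᵥ (B *ᵥ y) = y ⬝ᵥ (B *ᵥ x) := by
  rw [← dotProduct_transpose_mulVec, (isHermitian_iff_isSymm.1 hB).eq]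

lemma aN_nonneg (A : Matrix (Fin n) (Fin n) ℝ) (x : Fin n → ℝ) : 0 ≤ aN A x :=
  Real.sqrt_nonneg _

lemma aN_smul (A : Matrix (Fin n) (Fin n) ℝ) (c : ℝ) (x : Fin n → ℝ) :
    aN A (c • x) = |c| * aN A x := by
  rw [aN, aN, mulVec_smul, smul_dotProduct, dotProduct_smul, smul_eq_mul, smul_eq_mul,
    ← mul_assoc, ← sq, Real.sqrt_mul (sq_nonneg c), Real.sqrt_sq_eq_abs]

lemma dotProduct_mulVec_le_aN_mul_aN (hA : A.PosSemidef) (x y : Fin n → ℝ) :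
    x ⬝ᵥ (A *ᵥ y) ≤ aN A x * aN A y := by
  have hnonneg : ∀ z, 0 ≤ Matrix.toBilin' A z z := fun z => by
    simpa [Matrix.toBilin'_apply'] using hA.dotProduct_mulVec_nonneg z
  have hsymm : LinearMap.IsSymm (Matrix.toBilin' A) := LinearMap.isSymm_def.2 fun z w => by
    simpa [Matrix.toBilin'_apply'] using hA.isHermitian.dotProduct_mulVec_comm z w
  have hcs := LinearMap.BilinForm.apply_sq_le_of_symm _ hnonneg hsymm x y
  simp only [Matrix.toBilin'_apply'] at hcs
  rw [aN, aN, ← Real.sqrt_mul (by simpa using hA.dotProduct_mulVec_nonneg x)]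
  exact (le_abs_self _).trans (Real.abs_le_sqrt hcs)

lemma Matrix.PosDef.pos_of_mulVec_eq_smul (hA : A.PosDef) {u : Fin n → ℝ} (hu : u ≠ 0)
    {lam : ℝ} (heig : A *ᵥ u = lam • u) : 0 < lam := by
  have h := hA.dotProduct_mulVec_pos hu
  rw [heig, dotProduct_smul, smul_eq_mul] at h
  exact pos_of_mul_pos_left h (dotProduct_self_star_nonneg u)

end EnergyNorm

section L2Norm

variable {n : ℕ}

lemma l2N_eq_norm (x : Fin n → ℝ) : l2N x = ‖WithLp.toLp 2 x‖ := by
  rw [norm_eq_sqrt_real_inner, EuclideanSpace.inner_toLp_toLp, star_trivial]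
  rfl

lemma dotProduct_eq_inner (x y : Fin n → ℝ) :
    x ⬝ᵥ y = inner ℝ (WithLp.toLp 2 x) (WithLp.toLp 2 y) := by
  rw [EuclideanSpace.inner_toLp_toLp, star_trivial, dotProduct_comm]

lemma l2N_smul (c : ℝ) (x : Fin n → ℝ) : l2N (c • x) = |c| * l2N x := by
  rw [l2N_eq_norm, l2N_eq_norm, WithLp.toLp_smul, norm_smul, Real.norm_eq_abs]

lemma l2N_le_of_forall_dotProduct_le {x : Fin n → ℝ} {c : ℝ} (hc : 0 ≤ c)
    (h : ∀ g, x ⬝ᵥ g ≤ c * l2N g) : l2N x ≤ c := by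
  have hsq : x ⬝ᵥ x = l2N x * l2N x :=
    (Real.mul_self_sqrt (dotProduct_self_star_nonneg x)).symm
  rcases (Real.sqrt_nonneg (x ⬝ᵥ x)).eq_or_lt with hzero | hpos
  · rw [l2N, ← hzero]
    exact hc
  · exact le_of_mul_le_mul_right (hsq ▸ h x) hpos

end L2Norm

section EtaK

variable {n : ℕ} (A : Matrix (Fin n) (Fin n) ℝ) (P : (Fin n → ℝ) →ₗ[ℝ] (Fin n → ℝ))

lemma etaK_bddAbove :
    BddAbove ((fun g => aN A ((A⁻¹ *ᵥ g) - P (A⁻¹ *ᵥ g))) '' {g | l2N g = 1}) := by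
  have hsphere : IsCompact {g : Fin n → ℝ | l2N g = 1} := by
    simpa [Set.preimage, l2N_eq_norm] using
      (EuclideanSpace.equiv (Fin n) ℝ).symm.toHomeomorph.isCompact_preimage.2
        (isCompact_sphere (0 : EuclideanSpace ℝ (Fin n)) 1)
  have hP := LinearMap.continuous_of_finiteDimensional P
  have hcont : Continuous fun g => aN A ((A⁻¹ *ᵥ g) - P (A⁻¹ *ᵥ g)) := by
    unfold aN; fun_prop
  exact (hsphere.image hcont).bddAbove

lemma etaK_nonneg : 0 ≤ etaK A P :=
  Real.sSup_nonneg (by rintro _ ⟨g, -, rfl⟩; exact aN_nonneg _ _)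

lemma aN_sub_le_etaK_mul_l2N (g : Fin n → ℝ) :
    aN A (A⁻¹ *ᵥ g - P (A⁻¹ *ᵥ g)) ≤ etaK A P * l2N g := by
  rcases eq_or_ne g 0 with rfl | hg
  · simp [aN, l2N]
  have hpos : 0 < l2N g := by simpa [l2N_eq_norm] using hg
  have hunit : l2N ((l2N g)⁻¹ • g) = 1 := by
    rw [l2N_smul, abs_inv, abs_of_pos hpos, inv_mul_cancel₀ hpos.ne']
  have h : aN A (A⁻¹ *ᵥ ((l2N g)⁻¹ • g) - P (A⁻¹ *ᵥ ((l2N g)⁻¹ • g))) ≤ etaK A P :=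
    le_csSup (etaK_bddAbove A P) ⟨_, hunit, rfl⟩
  rw [mulVec_smul, map_smul, ← smul_sub, aN_smul, abs_inv, abs_of_pos hpos,
    inv_mul_le_iff₀ hpos] at h
  rwa [mul_comm]

lemma dotProduct_mulVec_sub_le_etaK (hA : A.PosDef) (x g : Fin n → ℝ) :
    x ⬝ᵥ (A *ᵥ (A⁻¹ *ᵥ g - P (A⁻¹ *ᵥ g))) ≤ etaK A P * aN A x * l2N g :=
  calc _ ≤ aN A x * aN A (A⁻¹ *ᵥ g - P (A⁻¹ *ᵥ g)) :=
        dotProduct_mulVec_le_aN_mul_aN hA.posSemidef _ _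
    _ ≤ aN A x * (etaK A P * l2N g) := by
        gcongr
        · exact aN_nonneg A x
        · exact aN_sub_le_etaK_mul_l2N A P g
    _ = _ := by ring

end EtaK

theorem Orthonormal.norm_sum_mul_inner_smul_le {ι E : Type*} [NormedAddCommGroup E]
    [InnerProductSpace ℝ E] {v : ι → E} (hv : Orthonormal ℝ v) (s : Finset ι) {b : ι → ℝ}
    {C : ℝ} (hC : 0 ≤ C) (hb : ∀ j ∈ s, |b j| ≤ C) (x : E) :
    ‖∑ j ∈ s, (b j * inner ℝ (v j) x) • v j‖ ≤ C * ‖x‖ := by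
  have hsq : ‖∑ j ∈ s, (b j * inner ℝ (v j) x) • v j‖ ^ 2 ≤ (C * ‖x‖) ^ 2 :=
    calc _ = ∑ j ∈ s, b j ^ 2 * inner ℝ (v j) x ^ 2 := by
          rw [← real_inner_self_eq_norm_sq, hv.inner_sum]
          exact Finset.sum_congr rfl fun j _ => by rw [conj_trivial]; ring
      _ ≤ ∑ j ∈ s, C ^ 2 * inner ℝ (v j) x ^ 2 :=
          Finset.sum_le_sum fun j hj => mul_le_mul_of_nonneg_right
            (sq_abs (b j) ▸ pow_le_pow_left₀ (abs_nonneg _) (hb j hj) 2) (sq_nonneg _)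
      _ = C ^ 2 * ∑ j ∈ s, ‖inner ℝ (v j) x‖ ^ 2 := by
          simp only [Finset.mul_sum, Real.norm_eq_abs, sq_abs]
      _ ≤ C ^ 2 * ‖x‖ ^ 2 := by
          gcongr
          exact hv.sum_inner_products_le x
      _ = _ := by ring
  exact (pow_le_pow_iff_left₀ (norm_nonneg _) (by positivity) two_ne_zero).1 hsq

section L2Orthonormal

variable {n : ℕ} {ι : Type*} [DecidableEq ι] {v : ι → Fin n → ℝ}

lemma l2N_sum_mul_dotProduct_smul_le (hv : ∀ i j, v i ⬝ᵥ v j = if i = j then 1 else 0)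
    (s : Finset ι) {b : ι → ℝ} {C : ℝ} (hC : 0 ≤ C) (hb : ∀ j ∈ s, |b j| ≤ C)
    (g : Fin n → ℝ) : l2N (∑ j ∈ s, (b j * (v j ⬝ᵥ g)) • v j) ≤ C * l2N g := by
  have hv' : Orthonormal ℝ fun j => WithLp.toLp 2 (v j) :=
    orthonormal_iff_ite.2 fun i j => by rw [← dotProduct_eq_inner, hv]
  simpa [l2N_eq_norm, WithLp.toLp_sum, dotProduct_eq_inner] using
    hv'.norm_sum_mul_inner_smul_le s hC hb (WithLp.toLp 2 g)

end L2Orthonormal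

section EnergyOrthonormal

variable {d ι : Type*} [Fintype d] {B : Matrix d d ℝ}

lemma dotProduct_mulVec_eq_zero_of_mem_span {f : ι → d → ℝ} {x y : d → ℝ}
    (hx : x ∈ Submodule.span ℝ (Set.range f)) (hf : ∀ l, f l ⬝ᵥ (B *ᵥ y) = 0) :
    x ⬝ᵥ (B *ᵥ y) = 0 := by
  induction hx using Submodule.span_induction with
  | mem z hz => obtain ⟨l, rfl⟩ := hz; exact hf l
  | zero => exact zero_dotProduct _
  | add z w _ _ hz hw => rw [add_dotProduct, hz, hw, add_zero]
  | smul a z _ hz => rw [smul_dotProduct, hz, smul_zero]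

variable [Fintype ι] [DecidableEq ι] {v : ι → d → ℝ}

lemma linearIndependent_of_dotProduct_mulVec_eq_ite
    (hv : ∀ i j, v i ⬝ᵥ (B *ᵥ v j) = if i = j then 1 else 0) : LinearIndependent ℝ v :=
  Fintype.linearIndependent_iff.2 fun c hc j => by
    simpa [sum_dotProduct, hv] using congrArg (· ⬝ᵥ (B *ᵥ v j)) hc

lemma eq_sum_dotProduct_mulVec_smul (hv : ∀ i j, v i ⬝ᵥ (B *ᵥ v j) = if i = j then 1 else 0)
    {x : d → ℝ} (hx : x ∈ Submodule.span ℝ (Set.range v)) :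
    x = ∑ j, (x ⬝ᵥ (B *ᵥ v j)) • v j := by
  obtain ⟨c, rfl⟩ := (Submodule.mem_span_range_iff_exists_fun ℝ).1 hx
  refine Finset.sum_congr rfl fun j _ => ?_
  simp [sum_dotProduct, hv]

end EnergyOrthonormal

section EnergyProjection

variable {n : ℕ} {A : Matrix (Fin n) (Fin n) ℝ} {K : Submodule ℝ (Fin n → ℝ)}
  {P : (Fin n → ℝ) →ₗ[ℝ] (Fin n → ℝ)}

structure IsEnergyProjection (A : Matrix (Fin n) (Fin n) ℝ) (K : Submodule ℝ (Fin n → ℝ))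
    (P : (Fin n → ℝ) →ₗ[ℝ] (Fin n → ℝ)) : Prop where
  mem : ∀ x, P x ∈ K
  dotProduct_mulVec_eq : ∀ x, ∀ y ∈ K, P x ⬝ᵥ (A *ᵥ y) = x ⬝ᵥ (A *ᵥ y)

namespace IsEnergyProjection

lemma sub_dotProduct_mulVec_eq_zero (hP : IsEnergyProjection A K P) (x : Fin n → ℝ)
    {y : Fin n → ℝ} (hy : y ∈ K) : (x - P x) ⬝ᵥ (A *ᵥ y) = 0 := by
  rw [sub_dotProduct, hP.dotProduct_mulVec_eq x y hy, sub_self]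

lemma aN_sub_le (hA : A.PosDef) (hP : IsEnergyProjection A K P) (x : Fin n → ℝ)
    {y : Fin n → ℝ} (hy : y ∈ K) : aN A (x - P x) ≤ aN A (x - y) := by
  have hperp := hP.sub_dotProduct_mulVec_eq_zero x (K.sub_mem (hP.mem x) hy)
  have hsplit : x - y = (x - P x) + (P x - y) := by abel
  apply Real.sqrt_le_sqrt
  rw [hsplit, mulVec_add, dotProduct_add, add_dotProduct, add_dotProduct, hperp,
    hA.isHermitian.dotProduct_mulVec_comm (P x - y), hperp]
  simpa using hA.posSemidef.dotProduct_mulVec_nonneg (P x - y)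

/-- Aubin–Nitsche duality: `v ⬝ᵥ s = (A⁻¹ v - P A⁻¹ v, s)_A` because `s ⊥_A K`. -/
lemma dotProduct_le_etaK (hA : A.PosDef) (hP : IsEnergyProjection A K P) {s : Fin n → ℝ}
    (hs : ∀ y ∈ K, s ⬝ᵥ (A *ᵥ y) = 0) (v : Fin n → ℝ) :
    v ⬝ᵥ s ≤ etaK A P * aN A s * l2N v :=
  calc v ⬝ᵥ s = s ⬝ᵥ (A *ᵥ (A⁻¹ *ᵥ v - P (A⁻¹ *ᵥ v))) := by
        rw [mulVec_sub, dotProduct_sub, hs _ (hP.mem _), sub_zero,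
          mulVec_nonsing_inv_mulVec hA.isUnit, dotProduct_comm]
    _ ≤ _ := dotProduct_mulVec_sub_le_etaK A P hA s v

variable {ι : Type*} [DecidableEq ι] {v : ι → Fin n → ℝ}

lemma dotProduct_le_etaK_add_sum [Fintype ι] (hA : A.PosDef) (hP : IsEnergyProjection A K P)
    (hv : ∀ i j, v i ⬝ᵥ (A *ᵥ v j) = if i = j then 1 else 0)
    (hspan : Submodule.span ℝ (Set.range v) = K) (e g : Fin n → ℝ) :
    e ⬝ᵥ g ≤ etaK A P * aN A e * l2N g + ∑ j, (v j ⬝ᵥ g) * (e ⬝ᵥ (A *ᵥ v j)) := by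
  set w := A⁻¹ *ᵥ g
  have hcoeff : ∀ j, P w ⬝ᵥ (A *ᵥ v j) = v j ⬝ᵥ g := fun j => by
    rw [hP.dotProduct_mulVec_eq w _ (hspan ▸ Submodule.subset_span ⟨j, rfl⟩),
      hA.isHermitian.dotProduct_mulVec_comm, mulVec_nonsing_inv_mulVec hA.isUnit]
  have hPw : e ⬝ᵥ (A *ᵥ P w) = ∑ j, (v j ⬝ᵥ g) * (e ⬝ᵥ (A *ᵥ v j)) := by
    conv_lhs => rw [eq_sum_dotProduct_mulVec_smul hv (hspan.ge (hP.mem w))]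
    simp only [mulVec_sum, mulVec_smul, dotProduct_sum, dotProduct_smul, hcoeff, smul_eq_mul]
  calc e ⬝ᵥ g = e ⬝ᵥ (A *ᵥ (w - P w)) + e ⬝ᵥ (A *ᵥ P w) := by
        rw [mulVec_sub, dotProduct_sub, sub_add_cancel, mulVec_nonsing_inv_mulVec hA.isUnit]
    _ ≤ _ := by
        rw [hPw]
        gcongr
        exact dotProduct_mulVec_sub_le_etaK A P hA e g

lemma sum_mul_dotProduct_le_etaK (hA : A.PosDef) (hP : IsEnergyProjection A K P)
    {s : Fin n → ℝ} (hs : ∀ y ∈ K, s ⬝ᵥ (A *ᵥ y) = 0)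
    (hv : ∀ i j, v i ⬝ᵥ v j = if i = j then 1 else 0) (S : Finset ι) {b : ι → ℝ} {C : ℝ}
    (hC : 0 ≤ C) (hb : ∀ j ∈ S, |b j| ≤ C) (g : Fin n → ℝ) :
    ∑ j ∈ S, b j * (v j ⬝ᵥ g) * (v j ⬝ᵥ s) ≤ etaK A P * aN A s * (C * l2N g) :=
  calc _ = (∑ j ∈ S, (b j * (v j ⬝ᵥ g)) • v j) ⬝ᵥ s := by
        simp only [sum_dotProduct, smul_dotProduct, smul_eq_mul]
    _ ≤ etaK A P * aN A s * l2N (∑ j ∈ S, (b j * (v j ⬝ᵥ g)) • v j) :=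
        hP.dotProduct_le_etaK hA hs _
    _ ≤ _ := by
        gcongr
        · exact mul_nonneg (etaK_nonneg A P) (aN_nonneg A s)
        · exact l2N_sum_mul_dotProduct_smul_le hv S hC hb g

lemma sum_mul_sub_dotProduct_mulVec {m k : ℕ} (hkm : k ≤ m) {v : Fin m → Fin n → ℝ}
    (hv : ∀ i j, v i ⬝ᵥ (A *ᵥ v j) = if i = j then 1 else 0)
    (hE : IsEnergyProjection A
      (Submodule.span ℝ (Set.range fun l : Fin k => v (Fin.castLE hkm l))) P)
    (c : Fin m → ℝ) (x : Fin n → ℝ) :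
    ∑ j, c j * ((x - P x) ⬝ᵥ (A *ᵥ v j)) =
      ∑ j ∈ Finset.univ.filter fun j : Fin m => k ≤ (j : ℕ), c j * (x ⬝ᵥ (A *ᵥ v j)) := by
  rw [Finset.sum_filter]
  refine Finset.sum_congr rfl fun j _ => ?_
  split_ifs with hj
  · rw [sub_dotProduct, dotProduct_mulVec_eq_zero_of_mem_span (hE.mem x) fun l => ?_, sub_zero]
    rw [hv, if_neg (Fin.ne_of_val_ne ?_)]
    have := l.isLt
    simp only [Fin.val_castLE]
    omega
  · rw [hE.sub_dotProduct_mulVec_eq_zero x (y := v j)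
      (Submodule.subset_span ⟨⟨j, by omega⟩, rfl⟩), mul_zero]

end IsEnergyProjection

end EnergyProjection

structure IsRitzPairs {n : ℕ} {ι : Type*} [DecidableEq ι] (A : Matrix (Fin n) (Fin n) ℝ)
    (K : Submodule ℝ (Fin n → ℝ)) (tlam : ι → ℝ) (tu : ι → Fin n → ℝ) : Prop where
  mem : ∀ j, tu j ∈ K
  residual_dotProduct_eq_zero : ∀ j, ∀ v ∈ K, (A *ᵥ tu j - tlam j • tu j) ⬝ᵥ v = 0
  dotProduct_mulVec_eq_ite : ∀ i j, tu i ⬝ᵥ (A *ᵥ tu j) = if i = j then 1 else 0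

namespace IsRitzPairs

variable {n : ℕ} {A : Matrix (Fin n) (Fin n) ℝ} {K : Submodule ℝ (Fin n → ℝ)}
  {ι : Type*} [DecidableEq ι] {tlam : ι → ℝ} {tu : ι → Fin n → ℝ}

lemma mul_dotProduct (hR : IsRitzPairs A K tlam tu) (j : ι) {x : Fin n → ℝ} (hx : x ∈ K) :
    tlam j * (tu j ⬝ᵥ x) = x ⬝ᵥ (A *ᵥ tu j) := by
  have h := hR.residual_dotProduct_eq_zero j x hx
  rwa [sub_dotProduct, smul_dotProduct, smul_eq_mul, sub_eq_zero, dotProduct_comm, eq_comm] at h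

lemma pos (hR : IsRitzPairs A K tlam tu) (j : ι) : 0 < tlam j := by
  have h := hR.mul_dotProduct j (hR.mem j)
  rw [hR.dotProduct_mulVec_eq_ite, if_pos rfl] at h
  exact pos_of_mul_pos_left (h ▸ one_pos) (dotProduct_self_star_nonneg (tu j))

lemma sqrt_smul_dotProduct_sqrt_smul (hR : IsRitzPairs A K tlam tu) (i j : ι) :
    (√(tlam i) • tu i) ⬝ᵥ (√(tlam j) • tu j) = if i = j then 1 else 0 := by
  have h := hR.mul_dotProduct j (hR.mem i)
  rw [hR.dotProduct_mulVec_eq_ite] at h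
  rw [smul_dotProduct, dotProduct_smul, smul_eq_mul, smul_eq_mul, dotProduct_comm]
  split_ifs at h ⊢ with hij
  · subst hij
    rw [← mul_assoc, Real.mul_self_sqrt (hR.pos i).le, h]
  · rw [(mul_eq_zero.1 h).resolve_left (hR.pos j).ne', mul_zero, mul_zero]

lemma span_eq [Fintype ι] (hR : IsRitzPairs A K tlam tu)
    (hK : Module.finrank ℝ K = Fintype.card ι) : Submodule.span ℝ (Set.range tu) = K := by
  refine Submodule.eq_of_le_of_finrank_le
    (Submodule.span_le.2 (Set.range_subset_iff.2 hR.mem)) ?_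
  rw [hK, finrank_span_eq_card
    (linearIndependent_of_dotProduct_mulVec_eq_ite hR.dotProduct_mulVec_eq_ite)]

variable {P : (Fin n → ℝ) →ₗ[ℝ] (Fin n → ℝ)} {lam : ℝ} {u : Fin n → ℝ}

lemma dotProduct_mulVec_mul_sub (hA : A.IsHermitian) (hP : IsEnergyProjection A K P)
    (hR : IsRitzPairs A K tlam tu) (heig : A *ᵥ u = lam • u) (hlam : lam ≠ 0) (j : ι) :
    u ⬝ᵥ (A *ᵥ tu j) * (1 / tlam j - 1 / lam) = -(tu j ⬝ᵥ (u - P u)) := by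
  have hritz : tlam j * (tu j ⬝ᵥ P u) = u ⬝ᵥ (A *ᵥ tu j) := by
    rw [hR.mul_dotProduct j (hP.mem u), hP.dotProduct_mulVec_eq u _ (hR.mem j)]
  have heig' : u ⬝ᵥ (A *ᵥ tu j) = lam * (tu j ⬝ᵥ u) := by
    rw [hA.dotProduct_mulVec_comm, heig, dotProduct_smul, smul_eq_mul]
  have htlam := (hR.pos j).ne'
  rw [dotProduct_sub]
  field_simp
  linear_combination (-lam) * hritz - tlam j * heig'

lemma sum_dotProduct_mul_le (hA : A.PosDef) (hP : IsEnergyProjection A K P)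
    (hR : IsRitzPairs A K tlam tu) (heig : A *ᵥ u = lam • u) (hlam : lam ≠ 0) (S : Finset ι)
    {δ M : ℝ} (hδ : 0 < δ) (hM : 0 ≤ M) (hδS : ∀ j ∈ S, δ ≤ |1 / tlam j - 1 / lam|)
    (hMS : ∀ j ∈ S, 1 / tlam j ≤ M) (g : Fin n → ℝ) :
    ∑ j ∈ S, (tu j ⬝ᵥ g) * (u ⬝ᵥ (A *ᵥ tu j)) ≤
      etaK A P * aN A (u - P u) * (M / δ * l2N g) := by
  have hterm : ∀ j ∈ S, (tu j ⬝ᵥ g) * (u ⬝ᵥ (A *ᵥ tu j)) =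
      -(1 / tlam j) / (1 / tlam j - 1 / lam) * ((√(tlam j) • tu j) ⬝ᵥ g) *
        ((√(tlam j) • tu j) ⬝ᵥ (u - P u)) := fun j hj => by
    have hd : 1 / tlam j - 1 / lam ≠ 0 := abs_pos.1 (hδ.trans_le (hδS j hj))
    have hrel : tu j ⬝ᵥ (u - P u) = -(u ⬝ᵥ (A *ᵥ tu j) * (1 / tlam j - 1 / lam)) := by
      rw [hR.dotProduct_mulVec_mul_sub hA.isHermitian hP heig hlam j, neg_neg]
    have hd' : lam - tlam j ≠ 0 := fun h => hd (by rw [sub_eq_zero.1 h, sub_self])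
    have htlam := (hR.pos j).ne'
    simp only [smul_dotProduct, smul_eq_mul, hrel]
    field_simp
    rw [Real.sq_sqrt (hR.pos j).le]
  have hb : ∀ j ∈ S, |-(1 / tlam j) / (1 / tlam j - 1 / lam)| ≤ M / δ := fun j hj => by
    rw [abs_div, abs_neg, abs_of_pos (one_div_pos.2 (hR.pos j))]
    exact div_le_div₀ hM (hMS j hj) hδ (hδS j hj)
  rw [Finset.sum_congr rfl hterm]
  exact hP.sum_mul_dotProduct_le_etaK hA (fun y hy => hP.sub_dotProduct_mulVec_eq_zero u hy)
    hR.sqrt_smul_dotProduct_sqrt_smul S (div_nonneg hM hδ.le) hb g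

end IsRitzPairs

theorem stmt6_general {n m : ℕ} (A : Matrix (Fin n) (Fin n) ℝ) (hA : A.PosDef)
    -- `K` is an `m`-dimensional subspace of `ℝⁿ`
    (K : Submodule ℝ (Fin n → ℝ)) (hK : Module.finrank ℝ K = m)
    -- `P` is the `A`-orthogonal (Galerkin) projection onto `K`
    (P : (Fin n → ℝ) →ₗ[ℝ] (Fin n → ℝ))
    (hPmem : ∀ x, P x ∈ K)
    (hPproj : ∀ x, ∀ y ∈ K, (P x) ⬝ᵥ (A *ᵥ y) = x ⬝ᵥ (A *ᵥ y))
    -- the Ritz pairs `(λ̃_j, ũ_j)` of `A` on `K`, with `A`-orthonormal Ritz vectors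
    (tlam : Fin m → ℝ) (tu : Fin m → (Fin n → ℝ)) (htmono : Monotone tlam)
    (htu : ∀ j, tu j ∈ K)
    (hRitz : ∀ j, ∀ v ∈ K, ((A *ᵥ tu j) - tlam j • tu j) ⬝ᵥ v = 0)
    (htortho : ∀ i j, tu i ⬝ᵥ (A *ᵥ tu j) = if i = j then (1 : ℝ) else 0)
    -- `1 ≤ k < m`
    (k : ℕ) (hkm : k < m)
    -- `(λ_1, u_1), …, (λ_k, u_k)` are exact eigenpairs of `A` with `λ_1 ≤ ⋯ ≤ λ_k`
    (lam : Fin k → ℝ) (u : Fin k → (Fin n → ℝ))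
    (hu : ∀ i, u i ≠ 0) (heig : ∀ i, A *ᵥ u i = lam i • u i)
    -- `δ_{k,i} > 0` is (a lower bound for) `min_{k < j ≤ m} |μ̃_j − μ_i|`,
    -- where `μ_i = 1/λ_i`, `μ̃_j = 1/λ̃_j`
    (δ : Fin k → ℝ) (hδpos : ∀ i, 0 < δ i)
    (hδ : ∀ (i : Fin k) (j : Fin m), k ≤ (j : ℕ) → δ i ≤ |1 / tlam j - 1 / lam i|)
    -- `E` is the `A`-orthogonal projection `E_{m,k}` onto `span{ũ_1, …, ũ_k}`
    (E : (Fin n → ℝ) →ₗ[ℝ] (Fin n → ℝ))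
    (hEmem : ∀ x, E x ∈
      Submodule.span ℝ (Set.range fun i : Fin k => tu (Fin.castLE hkm.le i)))
    (hEproj : ∀ x, ∀ y ∈
      Submodule.span ℝ (Set.range fun i : Fin k => tu (Fin.castLE hkm.le i)),
      (E x) ⬝ᵥ (A *ᵥ y) = x ⬝ᵥ (A *ᵥ y)) :
    ∀ i : Fin k, l2N (u i - E (u i)) ≤
      (1 + (1 / tlam ⟨k, hkm⟩) / δ i) * etaK A P * aN A (u i - E (u i)) := by
  have hP : IsEnergyProjection A K P := ⟨hPmem, hPproj⟩
  have hE : IsEnergyProjection A _ E := ⟨hEmem, hEproj⟩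
  have hR : IsRitzPairs A K tlam tu := ⟨htu, hRitz, htortho⟩
  intro i
  have hM : 0 < 1 / tlam ⟨k, hkm⟩ := one_div_pos.2 (hR.pos _)
  have hC : 0 ≤ 1 / tlam ⟨k, hkm⟩ / δ i := div_nonneg hM.le (hδpos i).le
  have hη := etaK_nonneg A P
  have he := aN_nonneg A (u i - E (u i))
  refine l2N_le_of_forall_dotProduct_le
    (mul_nonneg (mul_nonneg (add_nonneg zero_le_one hC) hη) he) fun g => ?_
  have hCg : 0 ≤ 1 / tlam ⟨k, hkm⟩ / δ i * l2N g := mul_nonneg hC (Real.sqrt_nonneg _)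
  calc _ ≤ etaK A P * aN A (u i - E (u i)) * l2N g +
        ∑ j ∈ Finset.univ.filter fun j : Fin m => k ≤ (j : ℕ),
          (tu j ⬝ᵥ g) * (u i ⬝ᵥ (A *ᵥ tu j)) := by
        rw [← hE.sum_mul_sub_dotProduct_mulVec hkm.le htortho]
        exact hP.dotProduct_le_etaK_add_sum hA htortho
          (hR.span_eq (by rw [hK, Fintype.card_fin])) _ g
    _ ≤ etaK A P * aN A (u i - E (u i)) * l2N g +
        etaK A P * aN A (u i - P (u i)) * (1 / tlam ⟨k, hkm⟩ / δ i * l2N g) := by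
        gcongr
        exact hR.sum_dotProduct_mul_le hA hP (heig i)
          (hA.pos_of_mulVec_eq_smul (hu i) (heig i)).ne' _ (hδpos i) hM.le
          (fun j hj => hδ i j (Finset.mem_filter.1 hj).2)
          (fun j hj => one_div_le_one_div_of_le (hR.pos _) (htmono (Finset.mem_filter.1 hj).2)) g
    _ ≤ etaK A P * aN A (u i - E (u i)) * l2N g +
        etaK A P * aN A (u i - E (u i)) * (1 / tlam ⟨k, hkm⟩ / δ i * l2N g) := by
        gcongr
        exact hP.aN_sub_le hA _
          (Submodule.span_le.2 (Set.range_subset_iff.2 fun l => htu _) (hEmem (u i)))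
    _ = _ := by ring

/-- `L²`-norm versus energy-norm error estimate for the first `k` eigenvector
approximations (second part of Theorem 3.2):
`‖u_i − E_{m,k} u_i‖₂ ≤ (1 + μ̃_{k+1}/δ_{k,i}) η_K ‖u_i − E_{m,k} u_i‖_A`. -/
theorem stmt6 {n m : ℕ} (A : Matrix (Fin n) (Fin n) ℝ) (hA : A.PosDef)
    -- `K` is an `m`-dimensional subspace of `ℝⁿ`
    (K : Submodule ℝ (Fin n → ℝ)) (hK : Module.finrank ℝ K = m)
    -- `P` is the `A`-orthogonal (Galerkin) projection onto `K`
    (P : (Fin n → ℝ) →ₗ[ℝ] (Fin n → ℝ))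
    (hPmem : ∀ x, P x ∈ K)
    (hPproj : ∀ x, ∀ y ∈ K, (P x) ⬝ᵥ (A *ᵥ y) = x ⬝ᵥ (A *ᵥ y))
    -- the Ritz pairs `(λ̃_j, ũ_j)` of `A` on `K`, with `A`-orthonormal Ritz vectors
    (tlam : Fin m → ℝ) (tu : Fin m → (Fin n → ℝ)) (htmono : Monotone tlam)
    (htu : ∀ j, tu j ∈ K)
    (hRitz : ∀ j, ∀ v ∈ K, ((A *ᵥ tu j) - tlam j • tu j) ⬝ᵥ v = 0)
    (htortho : ∀ i j, tu i ⬝ᵥ (A *ᵥ tu j) = if i = j then (1 : ℝ) else 0)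
    -- `1 ≤ k < m`
    (k : ℕ) (hk : 1 ≤ k) (hkm : k < m)
    -- `(λ_1, u_1), …, (λ_k, u_k)` are exact eigenpairs of `A` with `λ_1 ≤ ⋯ ≤ λ_k`
    (lam : Fin k → ℝ) (u : Fin k → (Fin n → ℝ)) (hlmono : Monotone lam)
    (hu : ∀ i, u i ≠ 0) (heig : ∀ i, A *ᵥ u i = lam i • u i)
    -- `δ_{k,i} > 0` is (a lower bound for) `min_{k < j ≤ m} |μ̃_j − μ_i|`,
    -- where `μ_i = 1/λ_i`, `μ̃_j = 1/λ̃_j`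
    (δ : Fin k → ℝ) (hδpos : ∀ i, 0 < δ i)
    (hδ : ∀ (i : Fin k) (j : Fin m), k ≤ (j : ℕ) → δ i ≤ |1 / tlam j - 1 / lam i|)
    -- `E` is the `A`-orthogonal projection `E_{m,k}` onto `span{ũ_1, …, ũ_k}`
    (E : (Fin n → ℝ) →ₗ[ℝ] (Fin n → ℝ))
    (hEmem : ∀ x, E x ∈
      Submodule.span ℝ (Set.range fun i : Fin k => tu (Fin.castLE hkm.le i)))
    (hEproj : ∀ x, ∀ y ∈
      Submodule.span ℝ (Set.range fun i : Fin k => tu (Fin.castLE hkm.le i)),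
      (E x) ⬝ᵥ (A *ᵥ y) = x ⬝ᵥ (A *ᵥ y)) :
    ∀ i : Fin k, l2N (u i - E (u i)) ≤
      (1 + (1 / tlam ⟨k, hkm⟩) / δ i) * etaK A P * aN A (u i - E (u i)) :=
  stmt6_general A hA K hK P hPmem hPproj tlam tu htmono htu hRitz htortho k hkm lam u hu heig δ
    hδpos hδ E hEmem hEproj
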